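/- arXiv:1312.3288 — 5 statements merged into one kernel-verified Lean document; each statement's English description precedes it below -/
import Mathlib

section
/- A bipartite graph H with bipartition (U, V) is a bicluster graph if and only if for all vertices i, k in U with i ≠ k and all vertices j, l in V with j ≠ l, whenever i is adjacent to l, k is adjacent to j, and k is adjacent to l in H, then i is adjacent to j in H. -/
variable {α : Type*}

/-- `G` is a bipartite graph with bipartition `(U, V)`: the parts cover the vertex set,
are disjoint, and every edge joins a vertex of `U` to a vertex of `V`. -/
def IsBipartiteWith (G : SimpleGraph α) (U V : Set α) : Prop :=
  (∀ x, x ∈ U ∨ x ∈ V) ∧ Disjoint U V ∧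
    ∀ ⦃x y⦄, G.Adj x y → (x ∈ U ∧ y ∈ V) ∨ (x ∈ V ∧ y ∈ U)

/-- A bicluster graph with bipartition `(U, V)`: a bipartite graph each of whose connected
components is a complete bipartite graph, i.e. any two vertices of `U` and `V` lying in the
same connected component are adjacent. -/
def IsBiclusterGraph (G : SimpleGraph α) (U V : Set α) : Prop :=
  IsBipartiteWith G U V ∧ ∀ i ∈ U, ∀ j ∈ V, G.Reachable i j → G.Adj i j

/-- `G` contains the path on four vertices `P4` as an induced subgraph. -/
def HasInducedP4 (G : SimpleGraph α) : Prop :=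
  ∃ a b c d : α, a ≠ b ∧ a ≠ c ∧ a ≠ d ∧ b ≠ c ∧ b ≠ d ∧ c ≠ d ∧
    G.Adj a b ∧ G.Adj b c ∧ G.Adj c d ∧ ¬ G.Adj a c ∧ ¬ G.Adj b d ∧ ¬ G.Adj a d

/-- The edit cost of `H` relative to `G`: number of edge deletions plus edge additions. -/
noncomputable def editCost (G H : SimpleGraph α) : ℕ :=
  (G.edgeSet \ H.edgeSet).ncard + (H.edgeSet \ G.edgeSet).ncard

/-- `H` is an optimal bicluster editing of `G` with respect to the bipartition `(U, V)`. -/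
def IsOptimalBiclusterEditing (G H : SimpleGraph α) (U V : Set α) : Prop :=
  IsBiclusterGraph H U V ∧
    ∀ H' : SimpleGraph α, IsBiclusterGraph H' U V → editCost G H ≤ editCost G H'

/-- The grouping efficacy `(m - d) / (m + a)` of `H` relative to `G`, where `m = |E(G)|`,
`d` is the number of deleted edges and `a` the number of added edges. -/
noncomputable def efficacy (G H : SimpleGraph α) : ℝ :=
  ((G.edgeSet.ncard : ℝ) - ((G.edgeSet \ H.edgeSet).ncard : ℝ)) /
    ((G.edgeSet.ncard : ℝ) + ((H.edgeSet \ G.edgeSet).ncard : ℝ))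

namespace IsBipartiteWith

variable {G : SimpleGraph α} {U V : Set α} {x y : α}

theorem mem_right_of_adj (hG : IsBipartiteWith G U V) (hx : x ∈ U) (h : G.Adj x y) : y ∈ V :=
  (hG.2.2 h).elim And.right fun hxy => absurd hx (Set.disjoint_right.mp hG.2.1 hxy.1)

theorem mem_left_of_adj (hG : IsBipartiteWith G U V) (hx : x ∈ V) (h : G.Adj x y) : y ∈ U :=
  (hG.2.2 h).elim (fun hxy => absurd hx (Set.disjoint_left.mp hG.2.1 hxy.1)) And.right

end IsBipartiteWith

/-- For bipartite `G`, this forbids induced paths `i - l - k - j` from `U` to `V`. -/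
def IsP4Closed (G : SimpleGraph α) (U V : Set α) : Prop :=
  ∀ i ∈ U, ∀ k ∈ U, ∀ j ∈ V, ∀ l ∈ V, i ≠ k → j ≠ l →
    G.Adj i l → G.Adj k j → G.Adj k l → G.Adj i j

theorem IsBiclusterGraph.isP4Closed {G : SimpleGraph α} {U V : Set α}
    (hG : IsBiclusterGraph G U V) : IsP4Closed G U V :=
  fun i hi _ _ j hj _ _ _ _ hil hkj hkl =>
    hG.2 i hi j hj (hil.reachable.trans (hkl.symm.reachable.trans hkj.reachable))

namespace IsP4Closed

variable {G : SimpleGraph α} {U V : Set α}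

/-- Closing the path `x - l - k - y` to the edge `xy` shortens any walk from `U` to `V` by two
steps; the second conjunct carries the induction through walks between two vertices of `V`. -/
theorem adj_of_walk (hP4 : IsP4Closed G U V) (hG : IsBipartiteWith G U V) {x y : α}
    (p : G.Walk x y) :
    (x ∈ U → y ∈ V → G.Adj x y) ∧
      (x ∈ V → y ∈ V → x = y ∨ ∃ k ∈ U, G.Adj k x ∧ G.Adj k y) := by
  induction p with
  | nil =>
    exact ⟨fun hxU hxV => absurd hxV (Set.disjoint_left.mp hG.2.1 hxU), fun _ _ => .inl rfl⟩
  | @cons x l y hxl q ih =>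
    refine ⟨fun hxU hyV => ?_,
      fun hxV hyV => .inr ⟨l, hG.mem_left_of_adj hxV hxl, hxl.symm, ?_⟩⟩
    · obtain rfl | ⟨k, hkU, hkl, hky⟩ := ih.2 (hG.mem_right_of_adj hxU hxl) hyV
      · exact hxl
      by_cases hxk : x = k
      · exact hxk ▸ hky
      by_cases hyl : y = l
      · exact hyl ▸ hxl
      exact hP4 x hxU k hkU y hyV l (hG.mem_right_of_adj hxU hxl) hxk hyl hxl hky hkl
    · exact ih.1 (hG.mem_left_of_adj hxV hxl) hyV

theorem isBiclusterGraph (hP4 : IsP4Closed G U V) (hG : IsBipartiteWith G U V) :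
    IsBiclusterGraph G U V :=
  ⟨hG, fun _ hi _ hj ⟨p⟩ => (hP4.adj_of_walk hG p).1 hi hj⟩

end IsP4Closed

theorem bicluster_iff_constraints_general (H : SimpleGraph α) (U V : Set α)
    (hH : IsBipartiteWith H U V) :
    IsBiclusterGraph H U V ↔
      ∀ i ∈ U, ∀ k ∈ U, ∀ j ∈ V, ∀ l ∈ V, i ≠ k → j ≠ l →
        H.Adj i l → H.Adj k j → H.Adj k l → H.Adj i j :=
  ⟨IsBiclusterGraph.isP4Closed, fun hP4 => IsP4Closed.isBiclusterGraph hP4 hH⟩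

/-- A bipartite graph `H` with bipartition `(U, V)` is a bicluster graph iff for all
`i ≠ k` in `U` and `j ≠ l` in `V`, whenever `il`, `kj`, `kl` are edges, so is `ij`. -/
theorem bicluster_iff_constraints [Fintype α] (H : SimpleGraph α) (U V : Set α)
    (hH : IsBipartiteWith H U V) :
    IsBiclusterGraph H U V ↔
      ∀ i ∈ U, ∀ k ∈ U, ∀ j ∈ V, ∀ l ∈ V, i ≠ k → j ≠ l →
        H.Adj i l → H.Adj k j → H.Adj k l → H.Adj i j :=
  bicluster_iff_constraints_general H U V hH
end

section
/- Let G be a finite bipartite graph with bipartition (U, V), and let a, b be two vertices lying in different connected components of G. Then in every optimal bicluster editing H of G, the vertices a and b lie in different connected components of H. -/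
variable {α : Type*}

/-
Every edge of an optimal bicluster editing `H` of `G` joins two vertices of the same component
of `G`. Otherwise keep only the edges of `H` inside components of `G`: every component of the
resulting graph lies inside a component of `H`, so it is still a bicluster graph; it deletes the
same edges of `G` as `H` does, but adds strictly fewer, contradicting optimality. Hence a path
in `H` from `a` to `b` never leaves the component of `a` in `G`.
-/

namespace SimpleGraph

theorem Reachable.of_forall_adj_reachable {G H : SimpleGraph α}
    (h : ∀ ⦃x y⦄, H.Adj x y → G.Reachable x y) {a b : α} (hab : H.Reachable a b) :
    G.Reachable a b := by
  rw [reachable_eq_reflTransGen] at h hab ⊢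
  exact Relation.reflTransGen_closed h a b hab

def restrictToComponents (H G : SimpleGraph α) : SimpleGraph α where
  Adj u v := H.Adj u v ∧ G.Reachable u v
  symm := ⟨fun _ _ h => ⟨h.1.symm, h.2.symm⟩⟩
  loopless := ⟨fun u h => H.loopless.irrefl u h.1⟩

variable {H G : SimpleGraph α}

@[simp]
theorem restrictToComponents_adj {u v : α} :
    (H.restrictToComponents G).Adj u v ↔ H.Adj u v ∧ G.Reachable u v :=
  Iff.rfl

theorem restrictToComponents_le : H.restrictToComponents G ≤ H :=
  fun _ _ h => (restrictToComponents_adj.1 h).1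

theorem reachable_of_restrictToComponents_reachable {u v : α}
    (h : (H.restrictToComponents G).Reachable u v) : G.Reachable u v :=
  h.of_forall_adj_reachable fun _ _ huv => (restrictToComponents_adj.1 huv).2

theorem edgeSet_diff_restrictToComponents :
    G.edgeSet \ (H.restrictToComponents G).edgeSet = G.edgeSet \ H.edgeSet := by
  ext e
  induction e using Sym2.inductionOn with
  | hf u v =>
    simp only [Set.mem_sdiff, restrictToComponents_adj, mem_edgeSet]
    exact and_congr_right fun hG => not_congr ⟨And.left, fun hH => ⟨hH, hG.reachable⟩⟩

theorem editCost_restrictToComponents_lt [Finite α] {x y : α} (hxy : H.Adj x y)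
    (hnxy : ¬ G.Reachable x y) : editCost G (H.restrictToComponents G) < editCost G H := by
  have hadd : (H.restrictToComponents G).edgeSet \ G.edgeSet ⊂ H.edgeSet \ G.edgeSet := by
    refine Set.ssubset_iff_subset_ne.2
      ⟨Set.sdiff_subset_sdiff_left (edgeSet_mono restrictToComponents_le), fun heq => ?_⟩
    have hcross : s(x, y) ∈ H.edgeSet \ G.edgeSet := ⟨hxy, fun hG => hnxy hG.reachable⟩
    exact hnxy (restrictToComponents_adj.1 (heq ▸ hcross).1).2
  unfold editCost
  rw [edgeSet_diff_restrictToComponents]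
  exact Nat.add_lt_add_left (Set.ncard_lt_ncard hadd) _

end SimpleGraph

theorem IsBiclusterGraph.restrictToComponents {H : SimpleGraph α} {U V : Set α}
    (hH : IsBiclusterGraph H U V) (G : SimpleGraph α) :
    IsBiclusterGraph (H.restrictToComponents G) U V := by
  obtain ⟨⟨hcover, hdisj, hbip⟩, hcomplete⟩ := hH
  refine ⟨⟨hcover, hdisj, fun _ _ h => hbip (SimpleGraph.restrictToComponents_adj.1 h).1⟩,
    fun i hi j hj hij => ?_⟩
  exact SimpleGraph.restrictToComponents_adj.2
    ⟨hcomplete i hi j hj (hij.mono SimpleGraph.restrictToComponents_le),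
      SimpleGraph.reachable_of_restrictToComponents_reachable hij⟩

theorem IsOptimalBiclusterEditing.reachable_of_adj [Finite α] {G H : SimpleGraph α}
    {U V : Set α} (hopt : IsOptimalBiclusterEditing G H U V) {x y : α} (hxy : H.Adj x y) :
    G.Reachable x y := by
  by_contra hnxy
  exact (SimpleGraph.editCost_restrictToComponents_lt hxy hnxy).not_ge
    (hopt.2 _ (hopt.1.restrictToComponents G))

theorem optimal_editing_separates_components_general [Fintype α] (G : SimpleGraph α) (U V : Set α)
    (a b : α) (hab : ¬ G.Reachable a b) :
    ∀ H : SimpleGraph α, IsOptimalBiclusterEditing G H U V → ¬ H.Reachable a b :=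
  fun _ hopt hHab => hab (hHab.of_forall_adj_reachable fun _ _ => hopt.reachable_of_adj)

/-- If `a`, `b` lie in different components of `G`, then they lie in different components
of every optimal bicluster editing of `G`. -/
theorem optimal_editing_separates_components [Fintype α] (G : SimpleGraph α) (U V : Set α)
    (hG : IsBipartiteWith G U V) (a b : α) (hab : ¬ G.Reachable a b) :
    ∀ H : SimpleGraph α, IsOptimalBiclusterEditing G H U V → ¬ H.Reachable a b :=
  optimal_editing_separates_components_general G U V a b hab
end

section
/- Let G be a finite bipartite graph with bipartition (U, V), let a ∈ U and b ∈ V, and suppose that either a and b lie in different connected components of G, or the graph distance between a and b in G is at least 4. Then there exists an optimal bicluster editing H of G in which a and b are not adjacent. -/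
/-!
Take an optimal editing `H` in which `a` and `b` are adjacent; they lie in one biclique, with
sides `R = N_H(b) ∋ a` and `C = N_H(a) ∋ b`. Deleting from `H` all edges across a vertex set `S`
keeps it a bicluster graph and changes the cost by the number of deleted edges lying in `G`
minus the number of those not in `G`. If at most half of `R` is `G`-adjacent to `b`, cut off
`b` alone. Otherwise cut off `a` together with `X = N_G(a) ∩ C`: an edge `uv` of `G` with
`u ∈ R \ {a}`, `v ∈ X` and `u` a `G`-neighbour of `b` would be the middle edge of an `a`–`b`
path of length 3, so at most half of the edges between `R \ {a}` and `X` lie in `G`.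
-/

variable {α : Type*}

section

variable {G H H' : SimpleGraph α} {U V S : Set α} {a b : α}

lemma IsBipartiteWith.mono (hH : IsBipartiteWith H U V) (h : H' ≤ H) :
    IsBipartiteWith H' U V :=
  ⟨hH.1, hH.2.1, fun _ _ hxy => hH.2.2 (h hxy)⟩

lemma IsBipartiteWith.mem_right_of_adj_s4 (hH : IsBipartiteWith H U V) (ha : a ∈ U)
    (h : H.Adj a b) : b ∈ V := by
  rcases hH.2.2 h with ⟨-, hb⟩ | ⟨ha', -⟩
  · exact hb
  · exact absurd ha' (hH.2.1.notMem_of_mem_left ha)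

lemma IsBipartiteWith.mem_left_of_adj_s4 (hH : IsBipartiteWith H U V) (hb : b ∈ V)
    (h : H.Adj a b) : a ∈ U := by
  rcases hH.2.2 h with ⟨ha, -⟩ | ⟨-, hb'⟩
  · exact ha
  · exact absurd hb (hH.2.1.notMem_of_mem_left hb')

lemma SimpleGraph.Walk.le_length_of_not_reachable_or_le_dist {G : SimpleGraph α} {n : ℕ}
    (h : ¬ G.Reachable a b ∨ n ≤ G.dist a b) (p : G.Walk a b) : n ≤ p.length :=
  h.elim (fun hr => absurd p.reachable hr) (fun hd => hd.trans (G.dist_le p))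

lemma isBiclusterGraph_bot (hG : IsBipartiteWith G U V) : IsBiclusterGraph ⊥ U V := by
  refine ⟨hG.mono bot_le, fun i hi j hj hij => ?_⟩
  rw [SimpleGraph.reachable_bot] at hij
  exact absurd (hij ▸ hj) (hG.2.1.notMem_of_mem_left hi)

lemma exists_isOptimalBiclusterEditing (hG : IsBipartiteWith G U V) :
    ∃ H, IsOptimalBiclusterEditing G H U V := by
  obtain ⟨H, hH, hmin⟩ := exists_minimalFor_of_wellFoundedLT (IsBiclusterGraph · U V)
    (editCost G) ⟨⊥, isBiclusterGraph_bot hG⟩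
  exact ⟨H, hH, fun H' hH' => (le_total _ _).elim id (hmin hH')⟩

lemma editCost_le_editCost_of_le [Finite α] (h : H' ≤ H)
    (hcut : 2 * ((H \ H') ⊓ G).edgeSet.ncard ≤ (H \ H').edgeSet.ncard) :
    editCost G H' ≤ editCost G H := by
  rw [SimpleGraph.edgeSet_inf, SimpleGraph.edgeSet_sdiff] at hcut
  have hsub : H'.edgeSet ⊆ H.edgeSet := SimpleGraph.edgeSet_mono h
  set P := H.edgeSet \ H'.edgeSet
  have hdel : (P ∩ G.edgeSet).ncard + (G.edgeSet \ H.edgeSet).ncard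
      = (G.edgeSet \ H'.edgeSet).ncard := by
    rw [← Set.ncard_inter_add_ncard_sdiff_eq_ncard (G.edgeSet \ H'.edgeSet) H.edgeSet]
    congr 2 <;> ext e <;> simp only [P, Set.mem_inter_iff, Set.mem_sdiff] <;> grind
  have hadd : (H'.edgeSet \ G.edgeSet).ncard + (P \ G.edgeSet).ncard
      = (H.edgeSet \ G.edgeSet).ncard := by
    rw [← Set.ncard_inter_add_ncard_sdiff_eq_ncard (H.edgeSet \ G.edgeSet) H'.edgeSet]
    congr 2 <;> ext e <;> simp only [P, Set.mem_inter_iff, Set.mem_sdiff] <;> grind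
  have hP := Set.ncard_inter_add_ncard_sdiff_eq_ncard P G.edgeSet
  unfold editCost
  omega

def orientedEdges (H : SimpleGraph α) (U V : Set α) : Set (α × α) :=
  {p | p.1 ∈ U ∧ p.2 ∈ V ∧ H.Adj p.1 p.2}

@[simp]
lemma mem_orientedEdges {p : α × α} :
    p ∈ orientedEdges H U V ↔ p.1 ∈ U ∧ p.2 ∈ V ∧ H.Adj p.1 p.2 :=
  Iff.rfl

lemma ncard_edgeSet_eq_ncard_orientedEdges (hH : IsBipartiteWith H U V) :
    H.edgeSet.ncard = (orientedEdges H U V).ncard := by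
  have himage : H.edgeSet = (fun p : α × α => s(p.1, p.2)) '' orientedEdges H U V := by
    ext e
    induction e using Sym2.ind with
    | _ x y =>
      refine ⟨fun hxy => ?_, ?_⟩
      · rcases hH.2.2 hxy with ⟨hx, hy⟩ | ⟨hx, hy⟩
        · exact ⟨(x, y), ⟨hx, hy, hxy⟩, rfl⟩
        · exact ⟨(y, x), ⟨hy, hx, hxy.symm⟩, Sym2.eq_swap⟩
      · rintro ⟨⟨u, v⟩, ⟨-, -, huv⟩, he⟩
        rwa [← he]
  rw [himage, Set.InjOn.ncard_image]
  rintro ⟨u, v⟩ ⟨hu, hv, -⟩ ⟨u', v'⟩ ⟨hu', hv', -⟩ he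
  rcases Sym2.eq_iff.mp he with ⟨rfl, rfl⟩ | ⟨rfl, -⟩
  · rfl
  · exact absurd hv' (hH.2.1.notMem_of_mem_left hu)

def deleteCut (H : SimpleGraph α) (S : Set α) : SimpleGraph α where
  Adj x y := H.Adj x y ∧ (x ∈ S ↔ y ∈ S)
  symm := ⟨fun _ _ h => ⟨h.1.symm, h.2.symm⟩⟩
  loopless := ⟨fun x h => H.loopless.irrefl x h.1⟩

@[simp]
lemma deleteCut_adj {x y : α} : (deleteCut H S).Adj x y ↔ H.Adj x y ∧ (x ∈ S ↔ y ∈ S) :=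
  Iff.rfl

lemma deleteCut_le : deleteCut H S ≤ H := fun _ _ h => h.1

lemma SimpleGraph.Reachable.of_deleteCut {x y : α} (h : (deleteCut H S).Reachable x y) :
    H.Reachable x y ∧ (x ∈ S ↔ y ∈ S) := by
  obtain ⟨w⟩ := h
  induction w with
  | nil => exact ⟨SimpleGraph.Reachable.refl _, Iff.rfl⟩
  | cons hxy _ ih => exact ⟨hxy.1.reachable.trans ih.1, hxy.2.trans ih.2⟩

lemma IsBiclusterGraph.deleteCut (hH : IsBiclusterGraph H U V) (S : Set α) :
    IsBiclusterGraph (deleteCut H S) U V :=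
  ⟨hH.1.mono deleteCut_le, fun i hi j hj hij =>
    ⟨hH.2 i hi j hj hij.of_deleteCut.1, hij.of_deleteCut.2⟩⟩

lemma editCost_deleteCut_le [Finite α] (hH : IsBipartiteWith H U V)
    (hcut : 2 * (orientedEdges ((H \ deleteCut H S) ⊓ G) U V).ncard ≤
      (orientedEdges (H \ deleteCut H S) U V).ncard) :
    editCost G (deleteCut H S) ≤ editCost G H := by
  refine editCost_le_editCost_of_le deleteCut_le ?_
  rwa [ncard_edgeSet_eq_ncard_orientedEdges (hH.mono (inf_le_left.trans sdiff_le)),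
    ncard_edgeSet_eq_ncard_orientedEdges (hH.mono sdiff_le)]

lemma editCost_deleteCut_singleton_le [Finite α] (hH : IsBipartiteWith H U V) (hb : b ∈ V)
    (hY : 2 * (G.neighborSet b ∩ H.neighborSet b).ncard ≤ (H.neighborSet b).ncard) :
    editCost G (deleteCut H {b}) ≤ editCost G H := by
  refine editCost_deleteCut_le hH ?_
  have hcut : H.neighborSet b ×ˢ {b} ⊆ orientedEdges (H \ deleteCut H {b}) U V := by
    rintro ⟨u, v⟩ ⟨hu, hv⟩
    obtain rfl : v = b := hv
    have hu : H.Adj u v := hu.symm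
    simp [hH.mem_left_of_adj_s4 hb hu, hb, hu, hu.ne]
  have hcutG : orientedEdges ((H \ deleteCut H {b}) ⊓ G) U V ⊆
      (G.neighborSet b ∩ H.neighborSet b) ×ˢ {b} := by
    rintro ⟨u, v⟩ ⟨hu, hv, ⟨huv, hcross⟩, hGuv⟩
    have hub : u ≠ b := fun h => hH.2.1.notMem_of_mem_left hu (h ▸ hb)
    obtain rfl : v = b := by simpa [hub, huv] using hcross
    exact ⟨⟨hGuv.symm, huv.symm⟩, rfl⟩
  calc 2 * (orientedEdges ((H \ deleteCut H {b}) ⊓ G) U V).ncard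
      ≤ 2 * ((G.neighborSet b ∩ H.neighborSet b) ×ˢ {b}).ncard := by
        grw [Set.ncard_le_ncard hcutG]
    _ ≤ (H.neighborSet b ×ˢ {b}).ncard := by simpa [Set.ncard_prod] using hY
    _ ≤ _ := Set.ncard_le_ncard hcut

lemma IsBiclusterGraph.adj_iff_adj_of_adj (hH : IsBiclusterGraph H U V) (ha : a ∈ U)
    (hb : b ∈ V) (hab : H.Adj a b) {u v : α} (hav : H.Adj a v) : H.Adj u v ↔ H.Adj u b := by
  have hv : v ∈ V := hH.1.mem_right_of_adj_s4 ha hav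
  refine ⟨fun huv => ?_, fun hub => ?_⟩
  · exact hH.2 u (hH.1.mem_left_of_adj_s4 hv huv) b hb
      (huv.reachable.trans (hav.symm.reachable.trans hab.reachable))
  · exact hH.2 u (hH.1.mem_left_of_adj_s4 hb hub) v hv
      (hub.reachable.trans (hab.symm.reachable.trans hav.reachable))

lemma editCost_deleteCut_insert_le [Finite α] (hH : IsBiclusterGraph H U V) (ha : a ∈ U)
    (hb : b ∈ V) (hab : H.Adj a b) (hG : ∀ p : G.Walk a b, 4 ≤ p.length)
    (hY : (H.neighborSet b).ncard ≤ 2 * (G.neighborSet b ∩ H.neighborSet b).ncard + 1) :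
    editCost G (deleteCut H (insert a (G.neighborSet a ∩ H.neighborSet a))) ≤
      editCost G H := by
  set X := G.neighborSet a ∩ H.neighborSet a
  set Y := G.neighborSet b ∩ H.neighborSet b
  set R := H.neighborSet b \ {a}
  refine editCost_deleteCut_le hH.1 ?_
  have hXV : ∀ {v}, v ∈ X → v ∈ V := fun hv => hH.1.mem_right_of_adj_s4 ha hv.2
  have hnotMemX : ∀ {u}, u ∈ U → u ∉ X := fun hu hX => hH.1.2.1.notMem_of_mem_left hu (hXV hX)
  have hcut : R ×ˢ X ⊆ orientedEdges (H \ deleteCut H (insert a X)) U V := by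
    rintro ⟨u, v⟩ ⟨⟨hub, hua⟩, hv⟩
    have hua : u ≠ a := hua
    have hub : H.Adj u b := hub.symm
    have hu := hH.1.mem_left_of_adj_s4 hb hub
    have huv : H.Adj u v := (hH.adj_iff_adj_of_adj ha hb hab hv.2).mpr hub
    simp [hu, hXV hv, huv, hua, hnotMemX hu, hv]
  have hcutG : orientedEdges ((H \ deleteCut H (insert a X)) ⊓ G) U V ⊆ (R \ Y) ×ˢ X := by
    rintro ⟨u, v⟩ ⟨hu, hv, ⟨huv, hcross⟩, hGuv⟩
    have hva : v ≠ a := fun h => hH.1.2.1.notMem_of_mem_left ha (h ▸ hv)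
    simp only [deleteCut_adj, Set.mem_insert_iff, hva, false_or, hnotMemX hu, or_false,
      huv, true_and] at hcross
    by_cases hua : u = a
    · subst hua
      exact (hcross (iff_of_true rfl ⟨hGuv, huv⟩)).elim
    have hvX : v ∈ X := by_contra fun hvX => hcross (iff_of_false hua hvX)
    have huY : u ∉ Y := fun huY =>
      Nat.lt_irrefl 3 (hG (.cons hvX.1 (.cons hGuv.symm (.cons huY.1.symm .nil))))
    exact ⟨⟨⟨((hH.adj_iff_adj_of_adj ha hb hab hvX.2).mp huv).symm, hua⟩, huY⟩, hvX⟩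
  have hGab : ¬ G.Adj a b := fun h => by simpa using hG (.cons h .nil)
  have hYR : Y ⊆ R := fun u hu => ⟨hu.2, fun hua => hGab ((hua : u = a) ▸ hu.1).symm⟩
  have hR : R.ncard = (H.neighborSet b).ncard - 1 :=
    Set.ncard_sdiff_singleton_of_mem (hab.symm : a ∈ H.neighborSet b)
  have hRY : 2 * (R \ Y).ncard ≤ R.ncard := by
    rw [Set.ncard_sdiff hYR]
    omega
  calc 2 * (orientedEdges ((H \ deleteCut H (insert a X)) ⊓ G) U V).ncard
      ≤ 2 * ((R \ Y) ×ˢ X).ncard := by grw [Set.ncard_le_ncard hcutG]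
    _ ≤ (R ×ˢ X).ncard := by
      rw [Set.ncard_prod, Set.ncard_prod, ← mul_assoc]
      gcongr
    _ ≤ _ := Set.ncard_le_ncard hcut

lemma exists_deleteCut_editCost_le [Finite α] (hH : IsBiclusterGraph H U V) (ha : a ∈ U)
    (hb : b ∈ V) (hab : H.Adj a b) (hG : ∀ p : G.Walk a b, 4 ≤ p.length) :
    ∃ S : Set α, ¬(a ∈ S ↔ b ∈ S) ∧ editCost G (deleteCut H S) ≤ editCost G H := by
  by_cases hY : 2 * (G.neighborSet b ∩ H.neighborSet b).ncard ≤ (H.neighborSet b).ncard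
  · exact ⟨{b}, by simpa using hab.ne, editCost_deleteCut_singleton_le hH.1 hb hY⟩
  · have hGab : ¬ G.Adj a b := fun h => by simpa using hG (.cons h .nil)
    exact ⟨_, by simp [hab.ne', hGab],
      editCost_deleteCut_insert_le hH ha hb hab hG (by omega)⟩

end

/-- Variable-fixing rule: if `a ∈ U`, `b ∈ V` lie in different components of `G` or are at
distance at least `4`, then some optimal bicluster editing has `a`, `b` non-adjacent. -/
theorem exists_optimal_editing_not_adj [Fintype α] (G : SimpleGraph α) (U V : Set α)
    (hG : IsBipartiteWith G U V) (a b : α) (ha : a ∈ U) (hb : b ∈ V)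
    (hab : ¬ G.Reachable a b ∨ 4 ≤ G.dist a b) :
    ∃ H : SimpleGraph α, IsOptimalBiclusterEditing G H U V ∧ ¬ H.Adj a b := by
  obtain ⟨H, hH⟩ := exists_isOptimalBiclusterEditing hG
  by_cases hHab : H.Adj a b
  · obtain ⟨S, hS, hcost⟩ := exists_deleteCut_editCost_le hH.1 ha hb hHab
      (·.le_length_of_not_reachable_or_le_dist hab)
    exact ⟨deleteCut H S, ⟨hH.1.deleteCut S, fun H' hH' => hcost.trans (hH.2 H' hH')⟩,
      fun h => hS h.2⟩
  · exact ⟨H, hH, hHab⟩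
end

section
/- Let G be a finite bipartite graph with bipartition (U, V) and m = |E(G)| ≥ 1 edges, and let H* be an optimal bicluster editing of G with d* = |E(G) \ E(H*)| deletions and a* = |E(H*) \ E(G)| additions. Then for every bicluster graph H on the same vertex set and bipartition, with d = |E(G) \ E(H)| and a = |E(H) \ E(G)|, the grouping efficacy satisfies (m − d)/(m + a) ≤ m/(m + a* + d*); moreover, the maximum grouping efficacy over all bicluster graphs on this bipartition is at least (m − d*)/(m + a*). -/
variable {α : Type*}

/-! For `c ≤ d + a`, clearing denominators turns `(m - d)/(m + a) ≤ m/(m + c)` into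
`m (c - d - a) ≤ d c`, whose left side is nonpositive. With `c = d* + a*`, optimality of `H*`
gives the upper bound; the lower bound holds for a maximiser of the efficacy, which exists since
a finite vertex set carries only finitely many graphs. -/

theorem sub_div_add_le_div_add_of_le_add {m d a c : ℝ} (hm : 0 < m) (hd : 0 ≤ d) (ha : 0 ≤ a)
    (hc : 0 ≤ c) (hcost : c ≤ d + a) : (m - d) / (m + a) ≤ m / (m + c) := by
  rw [div_le_div_iff₀ (by positivity) (by positivity)]
  nlinarith [mul_nonneg hd hc, mul_le_mul_of_nonneg_left hcost hm.le]

theorem efficacy_le_of_editCost_le {G H H₀ : SimpleGraph α} (hm : 0 < G.edgeSet.ncard)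
    (hcost : editCost G H₀ ≤ editCost G H) :
    efficacy G H ≤ (G.edgeSet.ncard : ℝ) /
      ((G.edgeSet.ncard : ℝ) + ((H₀.edgeSet \ G.edgeSet).ncard : ℝ) +
        ((G.edgeSet \ H₀.edgeSet).ncard : ℝ)) := by
  rw [add_assoc, add_comm ((H₀.edgeSet \ G.edgeSet).ncard : ℝ)]
  unfold editCost at hcost
  exact sub_div_add_le_div_add_of_le_add (by exact_mod_cast hm) (Nat.cast_nonneg _)
    (Nat.cast_nonneg _) (by positivity) (by exact_mod_cast hcost)

theorem efficacy_bounds_from_optimal_editing_general [Fintype α] (G : SimpleGraph α) (U V : Set α)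
    (hm : 1 ≤ G.edgeSet.ncard)
    (Hstar : SimpleGraph α) (hopt : IsOptimalBiclusterEditing G Hstar U V) :
    (∀ H : SimpleGraph α, IsBiclusterGraph H U V →
        efficacy G H ≤ (G.edgeSet.ncard : ℝ) /
          ((G.edgeSet.ncard : ℝ) + ((Hstar.edgeSet \ G.edgeSet).ncard : ℝ) +
            ((G.edgeSet \ Hstar.edgeSet).ncard : ℝ))) ∧
      ∃ H : SimpleGraph α, IsBiclusterGraph H U V ∧
        ((G.edgeSet.ncard : ℝ) - ((G.edgeSet \ Hstar.edgeSet).ncard : ℝ)) /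
            ((G.edgeSet.ncard : ℝ) + ((Hstar.edgeSet \ G.edgeSet).ncard : ℝ)) ≤
          efficacy G H ∧
        ∀ H' : SimpleGraph α, IsBiclusterGraph H' U V → efficacy G H' ≤ efficacy G H := by
  obtain ⟨hHstar, hmin⟩ := hopt
  refine ⟨fun H hH => efficacy_le_of_editCost_le hm (hmin H hH), ?_⟩
  obtain ⟨H, hH, hmax⟩ := Set.exists_max_image {H | IsBiclusterGraph H U V}
    (efficacy G) (Set.toFinite _) ⟨Hstar, hHstar⟩
  exact ⟨H, hH, hmax Hstar hHstar, hmax⟩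

/-- Bounds from an optimal bicluster editing `H*` of `G` with `d*` deletions and `a*`
additions: every bicluster graph has efficacy at most `m/(m + a* + d*)`, and the maximum
efficacy over all bicluster graphs is at least `(m - d*)/(m + a*)`. -/
theorem efficacy_bounds_from_optimal_editing [Fintype α] (G : SimpleGraph α) (U V : Set α)
    (hG : IsBipartiteWith G U V) (hm : 1 ≤ G.edgeSet.ncard)
    (Hstar : SimpleGraph α) (hopt : IsOptimalBiclusterEditing G Hstar U V) :
    (∀ H : SimpleGraph α, IsBiclusterGraph H U V →
        efficacy G H ≤ (G.edgeSet.ncard : ℝ) /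
          ((G.edgeSet.ncard : ℝ) + ((Hstar.edgeSet \ G.edgeSet).ncard : ℝ) +
            ((G.edgeSet \ Hstar.edgeSet).ncard : ℝ))) ∧
      ∃ H : SimpleGraph α, IsBiclusterGraph H U V ∧
        ((G.edgeSet.ncard : ℝ) - ((G.edgeSet \ Hstar.edgeSet).ncard : ℝ)) /
            ((G.edgeSet.ncard : ℝ) + ((Hstar.edgeSet \ G.edgeSet).ncard : ℝ)) ≤
          efficacy G H ∧
        ∀ H' : SimpleGraph α, IsBiclusterGraph H' U V → efficacy G H' ≤ efficacy G H :=
  efficacy_bounds_from_optimal_editing_general G U V hm Hstar hopt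
end

section
/- Let G be a finite bipartite graph with bipartition (U, V) and m = |E(G)| ≥ 1 edges. Suppose H0 is a bicluster graph on the same vertex set and bipartition with grouping efficacy μ0, and suppose K is a natural number such that m/(m + K) ≤ μ0 and such that every bicluster graph H on this bipartition with edit cost relative to G strictly less than K has grouping efficacy at most μ0. Then every bicluster graph on this bipartition has grouping efficacy at most μ0; that is, μ0 is the maximum grouping efficacy. -/
variable {α : Type*}

/-! A bicluster graph `H` with `d` deletions and `a` additions has efficacy
`(m - d) / (m + a) ≤ m / (m + (d + a))`, and the right-hand side decreases in the edit cost
`d + a`. So if the edit cost of `H` is at least `K`, its efficacy is at most `m / (m + K) ≤ μ0`;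
all other bicluster graphs are bounded by `μ0` by assumption. -/

theorem div_add_le_div_add_add {m d a : ℝ} (hm : 0 ≤ m) (hd : 0 ≤ d) (ha : 0 ≤ a) :
    (m - d) / (m + a) ≤ m / (m + (d + a)) := by
  rcases hm.eq_or_lt with rfl | hm
  · simp only [zero_sub, zero_add, zero_div, neg_div]
    exact neg_nonpos.2 (div_nonneg hd ha)
  · rw [div_le_div_iff₀ (by positivity) (by positivity)]
    nlinarith [mul_nonneg hd (add_nonneg hd ha)]

theorem div_add_le_div_add_of_le {m x y : ℝ} (hm : 0 ≤ m) (hx : 0 ≤ x) (hxy : x ≤ y) :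
    m / (m + y) ≤ m / (m + x) := by
  rcases hm.eq_or_lt with rfl | hm
  · simp
  · exact div_le_div_of_nonneg_left hm.le (by positivity) (by linarith)

theorem efficacy_le_div_editCost (G H : SimpleGraph α) :
    efficacy G H ≤ (G.edgeSet.ncard : ℝ) / (G.edgeSet.ncard + editCost G H) := by
  unfold efficacy editCost
  push_cast
  exact div_add_le_div_add_add (Nat.cast_nonneg _) (Nat.cast_nonneg _) (Nat.cast_nonneg _)

theorem efficacy_le_div_of_le_editCost {G H : SimpleGraph α} {K : ℕ} (hK : K ≤ editCost G H) :
    efficacy G H ≤ (G.edgeSet.ncard : ℝ) / (G.edgeSet.ncard + K) :=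
  (efficacy_le_div_editCost G H).trans <|
    div_add_le_div_add_of_le (Nat.cast_nonneg _) (Nat.cast_nonneg _) (Nat.cast_le.2 hK)

theorem efficacy_max_of_bound_general (G : SimpleGraph α) (U V : Set α)
    (μ0 : ℝ) (K : ℕ)
    (hK : (G.edgeSet.ncard : ℝ) / ((G.edgeSet.ncard : ℝ) + (K : ℝ)) ≤ μ0)
    (hless : ∀ H : SimpleGraph α, IsBiclusterGraph H U V → editCost G H < K →
      efficacy G H ≤ μ0) :
    ∀ H : SimpleGraph α, IsBiclusterGraph H U V → efficacy G H ≤ μ0 := by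
  intro H hH
  rcases lt_or_ge (editCost G H) K with hlt | hge
  · exact hless H hH hlt
  · exact (efficacy_le_div_of_le_editCost hge).trans hK

/-- Termination criterion of the exact iterative method: if `μ0` is attained by some
bicluster graph `H0`, `m/(m + K) ≤ μ0`, and every bicluster graph with edit cost below `K`
has efficacy at most `μ0`, then every bicluster graph has efficacy at most `μ0`. -/
theorem efficacy_max_of_bound [Fintype α] (G : SimpleGraph α) (U V : Set α)
    (hG : IsBipartiteWith G U V) (hm : 1 ≤ G.edgeSet.ncard)
    (H0 : SimpleGraph α) (hH0 : IsBiclusterGraph H0 U V)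
    (μ0 : ℝ) (hμ0 : efficacy G H0 = μ0) (K : ℕ)
    (hK : (G.edgeSet.ncard : ℝ) / ((G.edgeSet.ncard : ℝ) + (K : ℝ)) ≤ μ0)
    (hless : ∀ H : SimpleGraph α, IsBiclusterGraph H U V → editCost G H < K →
      efficacy G H ≤ μ0) :
    ∀ H : SimpleGraph α, IsBiclusterGraph H U V → efficacy G H ≤ μ0 :=
  efficacy_max_of_bound_general G U V μ0 K hK hless
end
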